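/- arXiv:2105.14467 — 2 statements merged into one kernel-verified Lean document; each statement's English description precedes it below -/
import Mathlib

section
/- Let R be a finite type of grammar rules with N = card R and 2 ≤ N, let P be a type of programs, and let der : P → List R be an injective, prefix-free encoding of programs by their leftmost derivations (i.e., for distinct programs p ≠ q, der p is not a prefix of der q). Define size(p) = ⌈log₂ N⌉ · length(der p), where ⌈log₂ N⌉ is the ceiling of the base-2 logarithm of N (Nat.clog 2 N). Then for every program p₀, the set { p : P | size(p) ≤ size(p₀) } is finite and has cardinality at most 2^(size(p₀)). -/
/-- Counting lemma: programs with prefix-free derivations of bounded size number at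
most `2 ^ size p₀`. -/
theorem stmt_0 {R P : Type*} [Fintype R] (N : ℕ) (hN : N = Fintype.card R) (h2 : 2 ≤ N)
    (der : P → List R) (hinj : Function.Injective der)
    (hpf : ∀ p q : P, p ≠ q → ¬ (der p <+: der q))
    (size : P → ℕ) (hsize : ∀ p, size p = Nat.clog 2 N * (der p).length)
    (p₀ : P) :
    {p : P | size p ≤ size p₀}.Finite ∧ {p : P | size p ≤ size p₀}.ncard ≤ 2 ^ size p₀ := by
  classical
  haveI : Nonempty R := by
    rw [hN] at h2
    exact Fintype.card_pos_iff.mp (by omega)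
  set c := Nat.clog 2 N with hc
  have hc1 : 0 < c := Nat.clog_pos (by norm_num) h2
  set n := (der p₀).length with hn
  set S := {p : P | size p ≤ size p₀} with hS
  have hlen : ∀ p ∈ S, (der p).length ≤ n := by
    intro p hp
    simp only [hS, Set.mem_setOf_eq, hsize] at hp
    exact Nat.le_of_mul_le_mul_left hp hc1
  let r0 : R := Classical.arbitrary R
  let F : P → List R := fun p => der p ++ List.replicate (n - (der p).length) r0
  have hFlen : ∀ p ∈ S, (F p).length = n := by
    intro p hp
    simp only [F, List.length_append, List.length_replicate]
    have := hlen p hp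
    omega
  have hFinj : ∀ p ∈ S, ∀ q ∈ S, F p = F q → p = q := by
    intro p hp q hq hfq
    by_contra hne
    have h1 : der p <+: F p := List.prefix_append _ _
    have h2 : der q <+: F q := List.prefix_append _ _
    rw [hfq] at h1
    rcases le_total (der p).length (der q).length with hle | hle
    · exact hpf p q hne (List.prefix_of_prefix_length_le h1 h2 hle)
    · exact hpf q p (Ne.symm hne) (List.prefix_of_prefix_length_le h2 h1 hle)
  let g : S → List.Vector R n := fun p => ⟨F p.1, hFlen p.1 p.2⟩
  have hginj : Function.Injective g := by
    intro p q h
    have : F p.1 = F q.1 := congrArg List.Vector.toList h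
    exact Subtype.ext (hFinj p.1 p.2 q.1 q.2 this)
  haveI hfin : Finite S := Finite.of_injective g hginj
  refine ⟨Set.finite_coe_iff.mp hfin, ?_⟩
  have h1 : S.ncard ≤ Fintype.card (List.Vector R n) := by
    rw [← Nat.card_coe_set_eq, ← Nat.card_eq_fintype_card]
    exact Nat.card_le_card_of_injective g hginj
  have h2' : Fintype.card (List.Vector R n) = N ^ n := by
    rw [hN]; exact card_vector n
  have h3 : N ^ n ≤ 2 ^ (c * n) := by
    rw [pow_mul]
    exact Nat.pow_le_pow_left (Nat.le_pow_clog (by norm_num) N) n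
  calc S.ncard ≤ N ^ n := by rw [← h2']; exact h1
    _ ≤ 2 ^ (c * n) := h3
    _ = 2 ^ size p₀ := by rw [hsize]
end

section
/- Let γ be a type, U : Finset γ a finite universe, ι a type of indices, S : ι → Finset γ a family of subsets, and w : ι → ℝ weights with w j > 0 for all j. Let k : ℕ, l : ℕ → ι, and R : ℕ → Finset γ satisfy: R 0 = U; R (i+1) = R i \ S (l i) for all i; for every i < k, R i is nonempty and the greedy choice condition holds, namely for every j : ι, (card (S j ∩ R i) : ℝ) / w j ≤ (card (S (l i) ∩ R i) : ℝ) / w (l i); and R k = ∅. Let C : Finset ι be any cover, i.e., U ⊆ C.biUnion S. Then ∑ i in Finset.range k, w (l i) ≤ (Real.log (card U) + 1) · ∑ j in C, w j. -/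
/-!
Charge the weight `w (l i)` of the `i`-th greedy set evenly to the elements it newly covers.
Since `C` covers the `#(R i)` uncovered elements, some set of `C` covers them at a price of at
most `W / #(R i)` per element, where `W = ∑ j ∈ C, w j`; by the greedy choice the same holds for
the chosen set, so the step costs at most `W · (#(R i) - #(R (i+1))) / #(R i)`, which is bounded
by `W · (H #(R i) - H #(R (i+1)))` with `H` the harmonic numbers. The sum telescopes to
`W · H #U ≤ W · (log #U + 1)`.
-/

open Finset

lemma sub_div_le_harmonic_sub {a b : ℕ} (hba : b ≤ a) :
    ((a : ℝ) - b) / a ≤ (harmonic a : ℝ) - harmonic b := by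
  have hsum : (harmonic a : ℝ) - harmonic b = ∑ i ∈ Ico b a, ((i + 1 : ℕ) : ℝ)⁻¹ := by
    rw [sum_Ico_eq_sub _ hba]
    simp [harmonic]
  have hterm : ∀ i ∈ Ico b a, (a : ℝ)⁻¹ ≤ ((i + 1 : ℕ) : ℝ)⁻¹ := by
    intro i hi
    have hia : i + 1 ≤ a := (mem_Ico.mp hi).2
    exact inv_anti₀ (by positivity) (by exact_mod_cast hia)
  calc ((a : ℝ) - b) / a = #(Ico b a) • (a : ℝ)⁻¹ := by
        rw [Nat.card_Ico, nsmul_eq_mul, Nat.cast_sub hba, div_eq_mul_inv]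
    _ ≤ _ := hsum ▸ card_nsmul_le_sum _ _ _ hterm

section GreedyStep

variable {γ ι : Type*} [DecidableEq γ] {S : ι → Finset γ} {C : Finset ι} {R : Finset γ}

lemma card_le_sum_card_inter_of_subset_biUnion (hcov : R ⊆ C.biUnion S) :
    #R ≤ ∑ j ∈ C, #(S j ∩ R) := by
  have hR : R ⊆ C.biUnion (fun j => S j ∩ R) := by
    intro x hx
    obtain ⟨j, hj, hxj⟩ := mem_biUnion.mp (hcov hx)
    exact mem_biUnion.mpr ⟨j, hj, mem_inter.mpr ⟨hxj, hx⟩⟩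
  exact (card_le_card hR).trans card_biUnion_le

variable {w : ι → ℝ} {m : ι}

lemma card_mul_weight_le_of_greedy (hcov : R ⊆ C.biUnion S) (hw : ∀ j ∈ C, 0 < w j)
    (hm : 0 < w m) (hgreedy : ∀ j ∈ C, (#(S j ∩ R) : ℝ) / w j ≤ #(S m ∩ R) / w m) :
    #R * w m ≤ (∑ j ∈ C, w j) * #(S m ∩ R) := by
  have hcount : (#R : ℝ) ≤ ∑ j ∈ C, (#(S j ∩ R) : ℝ) := by
    exact_mod_cast card_le_sum_card_inter_of_subset_biUnion hcov
  calc (#R : ℝ) * w m ≤ (∑ j ∈ C, (#(S j ∩ R) : ℝ)) * w m :=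
        mul_le_mul_of_nonneg_right hcount hm.le
    _ ≤ ∑ j ∈ C, w j * #(S m ∩ R) := by
        rw [sum_mul]
        refine sum_le_sum fun j hj => ?_
        have := (div_le_div_iff₀ (hw j hj) hm).mp (hgreedy j hj)
        linarith
    _ = (∑ j ∈ C, w j) * #(S m ∩ R) := by rw [sum_mul]

lemma weight_le_mul_harmonic_sub_of_greedy (hR : R.Nonempty) (hcov : R ⊆ C.biUnion S)
    (hw : ∀ j ∈ C, 0 < w j) (hm : 0 < w m)
    (hgreedy : ∀ j ∈ C, (#(S j ∩ R) : ℝ) / w j ≤ #(S m ∩ R) / w m) :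
    w m ≤ (∑ j ∈ C, w j) * ((harmonic #R : ℝ) - harmonic #(R \ S m)) := by
  have hW : 0 ≤ ∑ j ∈ C, w j := sum_nonneg fun j hj => (hw j hj).le
  have hpos : (0 : ℝ) < #R := by exact_mod_cast hR.card_pos
  have hnew : (#(S m ∩ R) : ℝ) = #R - #(R \ S m) := by
    have := card_sdiff_add_card_inter R (S m)
    rw [inter_comm] at this
    rw [eq_sub_iff_add_eq']
    exact_mod_cast this
  calc w m ≤ (∑ j ∈ C, w j) * (#(S m ∩ R) / #R) := by
        rw [mul_div_assoc', le_div_iff₀ hpos, mul_comm]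
        exact card_mul_weight_le_of_greedy hcov hw hm hgreedy
    _ ≤ _ := by
        rw [hnew]
        exact mul_le_mul_of_nonneg_left
          (sub_div_le_harmonic_sub (card_le_card sdiff_subset)) hW

end GreedyStep

/-- `(ln n + 1)`-approximation of the greedy algorithm for weighted set cover. -/
theorem stmt_6 {γ ι : Type*} [DecidableEq γ] (U : Finset γ) (S : ι → Finset γ)
    (w : ι → ℝ) (hw : ∀ j, 0 < w j)
    (k : ℕ) (l : ℕ → ι) (R : ℕ → Finset γ)
    (hR0 : R 0 = U)
    (hRstep : ∀ i, R (i + 1) = R i \ S (l i))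
    (hgreedy : ∀ i < k, (R i).Nonempty ∧
      ∀ j : ι, ((S j ∩ R i).card : ℝ) / w j ≤ ((S (l i) ∩ R i).card : ℝ) / w (l i))
    (hRk : R k = ∅)
    (C : Finset ι) (hC : U ⊆ C.biUnion S) :
    ∑ i ∈ Finset.range k, w (l i) ≤ (Real.log U.card + 1) * ∑ j ∈ C, w j := by
  set H : Finset γ → ℝ := fun T => harmonic #T
  have hsub : ∀ i, R i ⊆ U := by
    intro i
    induction i with
    | zero => rw [hR0]
    | succ n ih => rw [hRstep]; exact sdiff_subset.trans ih
  have hstep : ∀ i ∈ range k, w (l i) ≤ (∑ j ∈ C, w j) * (H (R i) - H (R (i + 1))) := by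
    intro i hi
    obtain ⟨hne, hbest⟩ := hgreedy i (mem_range.mp hi)
    rw [hRstep]
    exact weight_le_mul_harmonic_sub_of_greedy hne ((hsub i).trans hC)
      (fun j _ => hw j) (hw (l i)) (fun j _ => hbest j)
  calc ∑ i ∈ range k, w (l i)
      ≤ ∑ i ∈ range k, (∑ j ∈ C, w j) * (H (R i) - H (R (i + 1))) := sum_le_sum hstep
    _ = (∑ j ∈ C, w j) * harmonic #U := by
        rw [← mul_sum, sum_range_sub', hR0, hRk]
        simp [H]
    _ ≤ (Real.log U.card + 1) * ∑ j ∈ C, w j := by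
        rw [mul_comm]
        exact mul_le_mul_of_nonneg_right (by linarith [harmonic_le_one_add_log #U])
          (sum_nonneg fun j _ => (hw j).le)
end
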